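/- Let k ≥ 2 and let ℓ and m be k-subsets with ℓ_i = m_j for some indices 1 ≤ i, j ≤ k. Let ℓ̃ and m̃ be the (k−1)-subsets obtained by deleting the i-th entry of ℓ and the j-th entry of m respectively. Then α(ℓ̃, m̃) ≥ α(ℓ,m) − 1. -/

import Mathlib

/-!
If `ℓ` dominates `m` at shift `d` (that is, `ℓ a ≤ m b` whenever `b - a = d`), then so do the
sequences obtained by deleting a common value `ℓ i = m j`. Pairs on the same side of the deleted
positions keep their indices, or `m` is evaluated one step later, which only helps. The one
remaining configuration, `a ≥ i` and `b < j`, cannot occur: domination at `(a + 1, b + 1)` would give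
`ℓ i ≤ ℓ a < ℓ (a + 1) ≤ m (b + 1) ≤ m j = ℓ i`. Since `α(ℓ, m) = p` means domination at shift
`k - p`, and `(k - 1) - (p - 1) = k - p`, the theorem follows.
-/

/-- `α(ℓ,m)`: the largest `p ∈ {1,…,k}` such that `ℓ i ≤ m j` for all `1 ≤ i,j ≤ k`
with `j − i = k − p`, and `0` if no such `p` exists. -/
noncomputable def kAlpha (k : ℕ) (ℓ m : Fin k → ℤ) : ℕ :=
  sSup {p : ℕ | 1 ≤ p ∧ p ≤ k ∧
    ∀ i j : Fin k, (j.val : ℤ) - (i.val : ℤ) = (k : ℤ) - (p : ℤ) → ℓ i ≤ m j}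

def DominatesAtShift {k : ℕ} (ℓ m : Fin k → ℤ) (d : ℤ) : Prop :=
  ∀ a b : Fin k, (b.val : ℤ) - (a.val : ℤ) = d → ℓ a ≤ m b

namespace DominatesAtShift

variable {n : ℕ} {ℓ m : Fin (n + 1) → ℤ} {d : ℤ}

theorem comp_succAbove (hdom : DominatesAtShift ℓ m d) (hℓ : StrictMono ℓ) (hm : Monotone m)
    {i j : Fin (n + 1)} (h : ℓ i = m j) :
    DominatesAtShift (ℓ ∘ i.succAbove) (m ∘ j.succAbove) d := by
  intro a b hab
  simp only [Function.comp_apply]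
  rcases lt_or_ge a.castSucc i with hai | hai <;> rcases lt_or_ge b.castSucc j with hbj | hbj
  · rw [Fin.succAbove_of_castSucc_lt _ _ hai, Fin.succAbove_of_castSucc_lt _ _ hbj]
    exact hdom _ _ (by simpa using hab)
  · rw [Fin.succAbove_of_castSucc_lt _ _ hai, Fin.succAbove_of_le_castSucc _ _ hbj]
    exact (hdom _ _ (by simpa using hab)).trans (hm (Fin.castSucc_le_succ b))
  · exfalso
    refine lt_irrefl (ℓ a.succ) ?_
    calc ℓ a.succ ≤ m b.succ := hdom _ _ (by simpa using hab)
      _ ≤ m j := hm (Fin.castSucc_lt_iff_succ_le.mp hbj)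
      _ = ℓ i := h.symm
      _ ≤ ℓ a.castSucc := hℓ.monotone hai
      _ < ℓ a.succ := hℓ Fin.castSucc_lt_succ
  · rw [Fin.succAbove_of_le_castSucc _ _ hai, Fin.succAbove_of_le_castSucc _ _ hbj]
    exact hdom _ _ (by simpa using hab)

end DominatesAtShift

section kAlpha

variable {k : ℕ} {ℓ m : Fin k → ℤ}

theorem kAlpha_spec (h : kAlpha k ℓ m ≠ 0) :
    kAlpha k ℓ m ≤ k ∧ DominatesAtShift ℓ m (k - kAlpha k ℓ m) := by
  have hne : {p : ℕ | 1 ≤ p ∧ p ≤ k ∧ DominatesAtShift ℓ m (k - p)}.Nonempty := by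
    refine Set.nonempty_iff_ne_empty.2 fun hempty => h ?_
    change sSup {p : ℕ | 1 ≤ p ∧ p ≤ k ∧ DominatesAtShift ℓ m (k - p)} = 0
    rw [hempty, csSup_empty, bot_eq_zero]
  exact (Nat.sSup_mem hne ⟨k, fun _ hp => hp.2.1⟩).2

theorem le_kAlpha {p : ℕ} (hp : 1 ≤ p) (hpk : p ≤ k) (hdom : DominatesAtShift ℓ m (k - p)) :
    p ≤ kAlpha k ℓ m :=
  le_csSup ⟨k, fun _ hq => hq.2.1⟩ ⟨hp, hpk, hdom⟩

end kAlpha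

theorem alpha_delete_ge (n : ℕ) (ℓ m : Fin (n + 1) → ℤ)
    (hℓ : StrictMono ℓ) (hm : StrictMono m) (i j : Fin (n + 1)) (h : ℓ i = m j) :
    (kAlpha (n + 1) ℓ m : ℤ) - 1 ≤ (kAlpha n (ℓ ∘ i.succAbove) (m ∘ j.succAbove) : ℤ) := by
  set α := kAlpha (n + 1) ℓ m
  rcases Nat.lt_or_ge α 2 with hα | hα
  · omega
  obtain ⟨hαk, hdom⟩ := kAlpha_spec (show α ≠ 0 by omega)
  have hdel : DominatesAtShift (ℓ ∘ i.succAbove) (m ∘ j.succAbove) (n - (α - 1 : ℕ)) := by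
    convert hdom.comp_succAbove hℓ hm.monotone h using 1
    push_cast
    omega
  have := le_kAlpha (by omega) (by omega) hdel
  omega
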